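/- Let f : ℤ₂ → ℤ₂ be a 1-Lipschitz transitive map, x ∈ ℤ₂ and n ≥ 1. Then there exists φ ∈ ℤ₂ with f^[2^(n−1)](x) = x + 2^(n−1)·φ, and for any such φ the following identity holds in ℤ/2ℤ: δ₁(φ) = δ_{n−1}(x) + δ_n(x) + δ_n(f^[2^(n−1)](x)). -/

import Mathlib

/-!
If `f` is transitive modulo `2^m`, then `i ↦ f^[i] x mod 2^m` is a bijection from
`{0, …, 2^m - 1}` onto `ℤ/2^m`. Hence `f^[2^m] x ≡ x` modulo `2^m` (the orbit closes after
exactly `2^m` steps) but not modulo `2^(m+1)` (the orbit mod `2^(m+1)` would then repeat too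
early), i.e. `f^[2^m] x = x + 2^m φ` with `φ` odd. Adding `2^m φ` with `φ` odd flips digit `m`
of `x` and carries into digit `m+1` exactly when digit `m` of `x` is `1`; digit `m+1` also
receives digit `1` of `φ`. So `δ_{m+1}(x + 2^m φ) = δ_m(x) + δ_{m+1}(x) + δ_1(φ)` modulo `2`.
-/

open Function Finset

/-- `a ≡ b (mod 2^s)` in the 2-adic integers. -/
def CongMod (s : ℕ) (a b : ℤ_[2]) : Prop := ‖a - b‖ ≤ ((2 : ℝ) ^ s)⁻¹

/-- `f` is 1-Lipschitz for the 2-adic norm (a T-function). -/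
def OneLip (f : ℤ_[2] → ℤ_[2]) : Prop := ∀ a b : ℤ_[2], ‖f a - f b‖ ≤ ‖a - b‖

/-- `f` is transitive modulo `2^n`. -/
def TransMod (f : ℤ_[2] → ℤ_[2]) (n : ℕ) : Prop :=
  ∀ x y : ℤ_[2], ∃ i < 2 ^ n, CongMod n (f^[i] x) y

/-- `f` is transitive (single cycle modulo every power of 2). -/
def TransitiveT (f : ℤ_[2] → ℤ_[2]) : Prop := ∀ n : ℕ, 1 ≤ n → TransMod f n

/-- `f` is bijective modulo `2^n`. -/
def BijMod (f : ℤ_[2] → ℤ_[2]) (n : ℕ) : Prop :=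
  (∀ a b : ℤ_[2], CongMod n (f a) (f b) → CongMod n a b) ∧
  (∀ y : ℤ_[2], ∃ x : ℤ_[2], CongMod n (f x) y)

/-- `f` is bijective (measure-preserving T-function). -/
def BijectiveT (f : ℤ_[2] → ℤ_[2]) : Prop := ∀ n : ℕ, 1 ≤ n → BijMod f n

/-- `g` is a derivative of `f` modulo `2^M` with parameter `K`. -/
def IsDerivMod (f g : ℤ_[2] → ℤ_[2]) (M K : ℕ) : Prop :=
  ∀ x h : ℤ_[2], ‖h‖ ≤ ((2 : ℝ) ^ K)⁻¹ →
    ‖f (x + h) - f x - g x * h‖ ≤ ((2 : ℝ) ^ M)⁻¹ * ‖h‖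

/-- The `n`-th binary digit of a 2-adic integer, as an element of `ZMod 2`.
`PadicInt.appr x n` is the unique integer in `{0, …, 2^n - 1}` congruent to `x` mod `2^n`. -/
noncomputable def delta (n : ℕ) (x : ℤ_[2]) : ZMod 2 :=
  (((x.appr (n + 1) - x.appr n) / 2 ^ n : ℕ) : ZMod 2)

namespace PadicInt

variable {p : ℕ} [Fact p.Prime]

theorem toZModPow_eq_iff_dvd_sub {k : ℕ} {a b : ℤ_[p]} :
    toZModPow k a = toZModPow k b ↔ (p : ℤ_[p]) ^ k ∣ a - b := by
  rw [← sub_eq_zero, ← map_sub, ← RingHom.mem_ker, ker_toZModPow, Ideal.mem_span_singleton]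

theorem pow_dvd_sub_appr (z : ℤ_[p]) (k : ℕ) : (p : ℤ_[p]) ^ k ∣ z - z.appr k :=
  Ideal.mem_span_singleton.mp (appr_spec k z)

theorem appr_eq_mod_of_dvd_sub {k : ℕ} {z : ℤ_[p]} {N : ℕ} (h : (p : ℤ_[p]) ^ k ∣ z - N) :
    z.appr k = N % p ^ k := by
  have hz := toZModPow_eq_iff_dvd_sub.mpr h
  rw [map_natCast] at hz
  change ((z.appr k : ℕ) : ZMod (p ^ k)) = N at hz
  rwa [ZMod.natCast_eq_natCast_iff', Nat.mod_eq_of_lt (z.appr_lt k)] at hz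

end PadicInt

open PadicInt

theorem congMod_iff_dvd {s : ℕ} {a b : ℤ_[2]} :
    CongMod s a b ↔ (2 : ℤ_[2]) ^ s ∣ a - b := by
  have : ((2 : ℝ) ^ s)⁻¹ = ((2 : ℕ) : ℝ) ^ (-s : ℤ) := by simp
  rw [CongMod, this, norm_le_pow_iff_mem_span_pow, Ideal.mem_span_singleton, Nat.cast_ofNat]

theorem congMod_iff_toZModPow {s : ℕ} {a b : ℤ_[2]} :
    CongMod s a b ↔ toZModPow s a = toZModPow s b := by
  rw [congMod_iff_dvd, toZModPow_eq_iff_dvd_sub, Nat.cast_ofNat]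

theorem delta_eq_of_dvd_sub {k : ℕ} {z : ℤ_[2]} {N : ℕ}
    (h : (2 : ℤ_[2]) ^ (k + 1) ∣ z - N) :
    delta k z = ((N / 2 ^ k : ℕ) : ZMod 2) := by
  have hk : (2 : ℤ_[2]) ^ k ∣ z - N := (pow_dvd_pow 2 k.le_succ).trans h
  rw [delta, appr_eq_mod_of_dvd_sub (p := 2) (by exact_mod_cast h),
    appr_eq_mod_of_dvd_sub (p := 2) (by exact_mod_cast hk), Nat.mod_pow_succ,
    Nat.add_sub_cancel_left, Nat.mul_div_cancel_left _ (by positivity), ZMod.natCast_mod]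

theorem natCast_add_two_pow_mul_div_two_pow_succ (a m : ℕ) {c : ℕ} (hc : c % 2 = 1) :
    (((a + 2 ^ m * c) / 2 ^ (m + 1) : ℕ) : ZMod 2) =
      ((a / 2 ^ m : ℕ) : ZMod 2) + ((a / 2 ^ (m + 1) : ℕ) : ZMod 2) +
        ((c / 2 : ℕ) : ZMod 2) := by
  have hA : (a + 2 ^ m * c) / 2 ^ m = a / 2 ^ m + c := Nat.add_mul_div_left _ _ (by positivity)
  rw [pow_succ, ← Nat.div_div_eq_div_mul, ← Nat.div_div_eq_div_mul, hA, ← Nat.cast_add,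
    ← Nat.cast_add, ZMod.natCast_eq_natCast_iff']
  omega

theorem delta_succ_add_two_pow_mul {z φ : ℤ_[2]} (m : ℕ) (hφ : ¬ 2 ∣ φ) :
    delta (m + 1) (z + 2 ^ m * φ) = delta m z + delta (m + 1) z + delta 1 φ := by
  set a := z.appr (m + 2)
  set c := φ.appr 2
  have ha : (2 : ℤ_[2]) ^ (m + 2) ∣ z - a := by exact_mod_cast pow_dvd_sub_appr z (m + 2)
  have hc : (2 : ℤ_[2]) ^ 2 ∣ φ - c := by exact_mod_cast pow_dvd_sub_appr φ 2
  have hc_odd : c % 2 = 1 := by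
    refine Nat.mod_two_ne_zero.mp fun hc_even => hφ ?_
    have h2c : (2 : ℤ_[2]) ∣ c := by
      simpa using (Nat.dvd_of_mod_eq_zero hc_even).natCast (α := ℤ_[2])
    exact (dvd_sub_left h2c).mp ((dvd_pow_self 2 two_ne_zero).trans hc)
  have hsum : (2 : ℤ_[2]) ^ (m + 2) ∣ z + 2 ^ m * φ - ((a + 2 ^ m * c : ℕ) : ℤ_[2]) := by
    obtain ⟨u, hu⟩ := hc
    have : z + 2 ^ m * φ - ((a + 2 ^ m * c : ℕ) : ℤ_[2]) = (z - a) + 2 ^ (m + 2) * u := by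
      push_cast; linear_combination (2 : ℤ_[2]) ^ m * hu
    rw [this]
    exact dvd_add ha (dvd_mul_right _ _)
  rw [delta_eq_of_dvd_sub hsum, delta_eq_of_dvd_sub ha, delta_eq_of_dvd_sub hc,
    delta_eq_of_dvd_sub ((pow_dvd_pow 2 (m + 1).le_succ).trans ha)]
  exact natCast_add_two_pow_mul_div_two_pow_succ a m hc_odd

section Transitive

variable {f : ℤ_[2] → ℤ_[2]} {m : ℕ}

theorem TransitiveT.transMod (h : TransitiveT f) (n : ℕ) : TransMod f n := by
  rcases Nat.eq_zero_or_pos n with rfl | hn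
  · exact fun x y => ⟨0, one_pos, by simpa [CongMod] using norm_le_one (x - y)⟩
  · exact h n hn

theorem TransMod.injOn_orbit (h : TransMod f m) (x : ℤ_[2]) :
    Set.InjOn (fun i => toZModPow m (f^[i] x)) (range (2 ^ m)) := by
  refine Finset.injOn_of_surjOn_of_card_le (t := univ) _ (fun _ _ => mem_coe.mpr (mem_univ _))
    ?_ (by simp)
  intro y _
  obtain ⟨i, hi, hy⟩ := h x (y.val : ℤ_[2])
  rw [congMod_iff_toZModPow, map_natCast, ZMod.natCast_zmod_val] at hy
  exact ⟨i, by simpa using hi, hy⟩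

theorem TransMod.two_pow_dvd_iterate_sub (h : TransMod f m) (x : ℤ_[2]) :
    (2 : ℤ_[2]) ^ m ∣ f^[2 ^ m] x - x := by
  obtain ⟨i, hi, hx⟩ := h (f x) x
  rw [← iterate_succ_apply] at hx
  obtain hlt | heq := (Nat.succ_le_of_lt hi).lt_or_eq
  · refine absurd (h.injOn_orbit x (by simpa using hlt) (by simp) ?_) i.succ_ne_zero
    simpa using congMod_iff_toZModPow.mp hx
  · rwa [heq, congMod_iff_dvd] at hx

theorem TransMod.not_two_pow_succ_dvd_iterate_sub (h : TransMod f (m + 1)) (x : ℤ_[2]) :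
    ¬ (2 : ℤ_[2]) ^ (m + 1) ∣ f^[2 ^ m] x - x := by
  intro hdvd
  have hlt : 2 ^ m < 2 ^ (m + 1) := Nat.pow_lt_pow_succ one_lt_two
  refine pow_ne_zero m two_ne_zero (h.injOn_orbit x (by simpa using hlt) (by simp) ?_)
  simpa using (toZModPow_eq_iff_dvd_sub (p := 2)).mpr (by exact_mod_cast hdvd)

end Transitive

theorem phi_digit_identity_general (f : ℤ_[2] → ℤ_[2])
    (hft : TransitiveT f) (x : ℤ_[2]) (n : ℕ) (hn : 1 ≤ n) :
    (∃ φ : ℤ_[2], f^[2 ^ (n - 1)] x = x + 2 ^ (n - 1) * φ) ∧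
    ∀ φ : ℤ_[2], f^[2 ^ (n - 1)] x = x + 2 ^ (n - 1) * φ →
      delta 1 φ = delta (n - 1) x + delta n x + delta n (f^[2 ^ (n - 1)] x) := by
  obtain ⟨m, rfl⟩ := Nat.exists_eq_add_of_le' hn
  rw [Nat.add_sub_cancel]
  obtain ⟨φ₀, hφ₀⟩ := (hft.transMod m).two_pow_dvd_iterate_sub x
  refine ⟨⟨φ₀, by linear_combination hφ₀⟩, fun φ hφ => ?_⟩
  have hφ_odd : ¬ 2 ∣ φ := fun ⟨ψ, hψ⟩ =>
    (hft.transMod (m + 1)).not_two_pow_succ_dvd_iterate_sub x ⟨ψ, by rw [hφ, hψ]; ring⟩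
  rw [hφ, delta_succ_add_two_pow_mul m hφ_odd]
  grind

/-- For a transitive T-function, `f^[2^(n-1)](x) = x + 2^(n-1) φ` for some `φ`, and the
second binary digit of `φ` is expressed through digits of `x` and `f^[2^(n-1)](x)`. -/
theorem phi_digit_identity (f : ℤ_[2] → ℤ_[2])
    (hf : OneLip f) (hft : TransitiveT f) (x : ℤ_[2]) (n : ℕ) (hn : 1 ≤ n) :
    (∃ φ : ℤ_[2], f^[2 ^ (n - 1)] x = x + 2 ^ (n - 1) * φ) ∧
    ∀ φ : ℤ_[2], f^[2 ^ (n - 1)] x = x + 2 ^ (n - 1) * φ →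
      delta 1 φ = delta (n - 1) x + delta n x + delta n (f^[2 ^ (n - 1)] x) :=
  phi_digit_identity_general f hft x n hn
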